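/- arXiv:1208.3166 — 2 statements merged into one kernel-verified Lean document; each statement's English description precedes it below -/
import Mathlib

section
/- Let a, b, j, r be integers with 1 < a ≤ b, j ≥ a, and r ≥ 0. Let φ : ℕ×ℕ → ℕ be the monoid homomorphism φ(c₁,c₂) = c₁ + b·c₂, and let Φ be the induced map on finite multisets (applying φ to each element). Set μ₀ = (1,0)^{j}·(0,1)^r and μ₁ = (1,0)^{j−a}·(a,0)·(0,1)^r, as multisets of nonzero elements of ℕ×ℕ, and ρ₀ = 1^{j}·b^r and ρ₁ = 1^{j−a}·a·b^r, as multisets of positive integers. Then Φ restricts to a bijection from {λ : μ₀ ≤ λ} ∖ {λ : μ₁ ≤ λ} onto {λ : ρ₀ ≤ λ} ∖ {λ : ρ₁ ≤ λ} (refinement order on multisets over ℕ×ℕ and over ℕ respectively), and moreover m(Φ(λ)) = m(λ) for every λ in the domain, i.e., the bijection preserves multiplicity partitions. (This is the bijection established in the proof of Lemma 5.21 of the paper.) -/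
/-!
Lifting: anything coarser than `Φ μ` is `Φ λ` for some `λ` coarser than `μ`, so `Φ` maps
`{μ₀ ≤ ·}` onto `{ρ₀ ≤ ·}` and `{μ₁ ≤ ·}` onto `{ρ₁ ≤ ·}`. A multiset is coarser than `μ₀` iff it
has sum `(j, r)` and no zero part, and then it is coarser than `μ₁` as soon as one part has first
coordinate `≥ a` (split `(a, 0)` off that part). Hence every `λ` in the domain has all first
coordinates `< a ≤ b`, so `Φ` is undone by base-`b` digits on `λ`, which gives injectivity and the
equality of multiplicity partitions. If `Φ λ = Φ κ` with `κ ≥ μ₁`, then comparing the sums of the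
last base-`b` digits with the sums of first coordinates forces all first coordinates of `κ` to be
`< b` as well, so `κ = λ`, which is impossible; thus `Φ` misses `{ρ₁ ≤ ·}`.
-/

/-- An elementary merge replaces two elements `x`, `y` of a multiset by the single
element `x + y`. -/
def ElemMerge {M : Type*} [AddCommMonoid M] (μ ν : Multiset M) : Prop :=
  ∃ (x y : M) (rest : Multiset M), μ = x ::ₘ y ::ₘ rest ∧ ν = (x + y) ::ₘ rest

/-- The refinement order: `Refines μ λ` iff `λ` can be obtained from `μ` by a finite
(possibly empty) sequence of elementary merges. -/
def Refines {M : Type*} [AddCommMonoid M] : Multiset M → Multiset M → Prop :=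
  Relation.ReflTransGen ElemMerge

/-- The multiplicity partition `m(λ)`: the finite multiset of multiplicities with which
the distinct elements of `λ` occur. -/
noncomputable def multPartition {M : Type*} (lam : Multiset M) : Multiset ℕ :=
  letI := Classical.decEq M
  lam.dedup.map fun x => lam.count x

section Refinement

variable {M N : Type*} [AddCommMonoid M] [AddCommMonoid N]

theorem Refines.sum_eq {μ ν : Multiset M} (h : Refines μ ν) : ν.sum = μ.sum := by
  induction h with
  | refl => rfl
  | tail _ hmerge ih =>
    obtain ⟨x, y, rest, rfl, rfl⟩ := hmerge
    simpa [add_assoc] using ih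

theorem Refines.zero_notMem [PartialOrder M] [CanonicallyOrderedAdd M] {μ ν : Multiset M}
    (h : Refines μ ν) (h0 : (0 : M) ∉ μ) : (0 : M) ∉ ν := by
  induction h with
  | refl => exact h0
  | tail _ hmerge ih =>
    obtain ⟨x, y, rest, rfl, rfl⟩ := hmerge
    simp only [Multiset.mem_cons, not_or, eq_comm (a := (0 : M)), add_eq_zero] at ih ⊢
    exact ⟨fun hxy => ih.1 hxy.1, ih.2.2⟩

theorem ElemMerge.add_left {μ ν : Multiset M} (σ : Multiset M) (h : ElemMerge μ ν) :
    ElemMerge (σ + μ) (σ + ν) := by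
  obtain ⟨x, y, rest, rfl, rfl⟩ := h
  exact ⟨x, y, σ + rest, by simp only [Multiset.add_cons], by simp only [Multiset.add_cons]⟩

theorem Refines.add_left {μ ν : Multiset M} (σ : Multiset M) (h : Refines μ ν) :
    Refines (σ + μ) (σ + ν) :=
  Relation.ReflTransGen.lift (σ + ·) (fun _ _ => ElemMerge.add_left σ) _ _ h

theorem Refines.add {μ ν μ' ν' : Multiset M} (h : Refines μ ν) (h' : Refines μ' ν') :
    Refines (μ + μ') (ν + ν') := by
  have h₁ : Refines (μ + μ') (ν + μ') := by
    simpa only [add_comm _ μ'] using h.add_left μ'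
  exact Relation.ReflTransGen.trans h₁ (h'.add_left ν)

theorem Refines.cons {μ ν : Multiset M} (x : M) (h : Refines μ ν) :
    Refines (x ::ₘ μ) (x ::ₘ ν) := by
  simpa only [Multiset.singleton_add] using h.add_left {x}

theorem refines_singleton_sum {μ : Multiset M} (hμ : μ ≠ 0) : Refines μ {μ.sum} := by
  induction μ using Multiset.induction_on with
  | empty => exact absurd rfl hμ
  | cons x s ih =>
    rcases eq_or_ne s 0 with rfl | hs
    · rw [Multiset.sum_cons, Multiset.sum_zero, add_zero]
      exact Relation.ReflTransGen.refl
    · rw [Multiset.sum_cons]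
      exact ((ih hs).cons x).tail ⟨x, s.sum, 0, rfl, rfl⟩

theorem refines_bind (lam : Multiset M) (f : M → Multiset M) (hne : ∀ x ∈ lam, f x ≠ 0)
    (hsum : ∀ x ∈ lam, (f x).sum = x) : Refines (lam.bind f) lam := by
  induction lam using Multiset.induction_on with
  | empty => exact Relation.ReflTransGen.refl
  | cons x s ih =>
    have hx : Refines (f x) {x} := by
      simpa only [hsum x (s.mem_cons_self x)] using refines_singleton_sum (hne x (s.mem_cons_self x))
    have hs := ih (fun y hy => hne y (Multiset.mem_cons_of_mem hy))
      (fun y hy => hsum y (Multiset.mem_cons_of_mem hy))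
    simpa only [Multiset.cons_bind, Multiset.singleton_add] using hx.add hs

theorem Refines.map (f : M →+ N) {μ ν : Multiset M} (h : Refines μ ν) :
    Refines (μ.map f) (ν.map f) := by
  refine Relation.ReflTransGen.lift (Multiset.map f) ?_ _ _ h
  rintro _ _ ⟨x, y, rest, rfl, rfl⟩
  exact ⟨f x, f y, rest.map f, by simp, by simp⟩

theorem Refines.exists_of_map (f : M →+ N) {μ : Multiset M} {ν : Multiset N}
    (h : Refines (μ.map f) ν) : ∃ lam, Refines μ lam ∧ lam.map f = ν := by
  classical
  induction h with
  | refl => exact ⟨μ, Relation.ReflTransGen.refl, rfl⟩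
  | tail _ hmerge ih =>
    obtain ⟨lam, hlam, rfl⟩ := ih
    obtain ⟨u, v, rest, h₁, rfl⟩ := hmerge
    obtain ⟨x, hx, rfl, h₂⟩ := (Multiset.map_eq_cons f lam (v ::ₘ rest) u).mpr h₁
    obtain ⟨y, hy, rfl, rfl⟩ := (Multiset.map_eq_cons f (lam.erase x) rest v).mpr h₂
    refine ⟨(x + y) ::ₘ (lam.erase x).erase y, hlam.tail ⟨x, y, _, ?_, rfl⟩, by simp⟩
    rw [Multiset.cons_erase hy, Multiset.cons_erase hx]

end Refinement

section UnitDecomp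

def unitDecomp (p : ℕ × ℕ) : Multiset (ℕ × ℕ) :=
  Multiset.replicate p.1 (1, 0) + Multiset.replicate p.2 (0, 1)

theorem unitDecomp_add (p q : ℕ × ℕ) : unitDecomp (p + q) = unitDecomp p + unitDecomp q := by
  simp only [unitDecomp, Prod.fst_add, Prod.snd_add, Multiset.replicate_add]
  abel

theorem sum_unitDecomp (p : ℕ × ℕ) : (unitDecomp p).sum = p := by
  simp [unitDecomp, Multiset.sum_replicate]

theorem bind_unitDecomp (lam : Multiset (ℕ × ℕ)) : lam.bind unitDecomp = unitDecomp lam.sum := by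
  induction lam using Multiset.induction_on with
  | empty => rfl
  | cons x s ih => rw [Multiset.cons_bind, ih, Multiset.sum_cons, unitDecomp_add]

theorem refines_unitDecomp_iff {s : ℕ × ℕ} {lam : Multiset (ℕ × ℕ)} :
    Refines (unitDecomp s) lam ↔ lam.sum = s ∧ 0 ∉ lam := by
  constructor
  · intro h
    refine ⟨h.sum_eq.trans (sum_unitDecomp s), h.zero_notMem ?_⟩
    simp [unitDecomp, Multiset.mem_replicate, Prod.ext_iff]
  · rintro ⟨rfl, h0⟩
    rw [← bind_unitDecomp]
    refine refines_bind lam unitDecomp (fun x hx hx0 => h0 ?_) (fun x _ => sum_unitDecomp x)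
    rwa [← sum_unitDecomp x, hx0, Multiset.sum_zero] at hx

theorem refines_cons_unitDecomp_sub {lam : Multiset (ℕ × ℕ)} {p x : ℕ × ℕ} (h0 : 0 ∉ lam)
    (hp : p ∈ lam) (hxp : x ≤ p) : Refines (x ::ₘ unitDecomp (lam.sum - x)) lam := by
  obtain ⟨rest, rfl⟩ := Multiset.exists_cons_of_mem hp
  obtain ⟨y, rfl⟩ := exists_add_of_le hxp
  have hsum : ((x + y) ::ₘ rest).sum - x = (y ::ₘ rest).sum := by
    rw [Multiset.sum_cons, Multiset.sum_cons, add_assoc, add_tsub_cancel_left]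
  rw [hsum]
  rcases eq_or_ne y 0 with rfl | hy
  · simp only [add_zero, Multiset.mem_cons, not_or, zero_add, Multiset.sum_cons] at h0 ⊢
    exact (refines_unitDecomp_iff.mpr ⟨rfl, h0.2⟩).cons x
  · have hrest : 0 ∉ y ::ₘ rest := by
      simp only [Multiset.mem_cons, not_or] at h0 ⊢
      exact ⟨hy.symm, h0.2⟩
    exact ((refines_unitDecomp_iff.mpr ⟨rfl, hrest⟩).cons x).tail ⟨x, y, rest, rfl, rfl⟩

end UnitDecomp

section BaseExpansion

variable (b : ℕ)

def baseEval : ℕ × ℕ →+ ℕ where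
  toFun p := p.1 + b * p.2
  map_zero' := rfl
  map_add' p q := by simp only [Prod.fst_add, Prod.snd_add]; ring

def baseDigits (n : ℕ) : ℕ × ℕ := (n % b, n / b)

variable {b}

theorem baseEval_apply (p : ℕ × ℕ) : baseEval b p = p.1 + b * p.2 := rfl

theorem baseEval_mod (p : ℕ × ℕ) : baseEval b p % b = p.1 % b := by
  rw [baseEval_apply, Nat.add_mul_mod_self_left]

theorem baseDigits_baseEval {p : ℕ × ℕ} (hp : p.1 < b) : baseDigits b (baseEval b p) = p := by
  have hb : 0 < b := p.1.zero_le.trans_lt hp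
  rw [baseDigits, baseEval_mod, baseEval_apply, Nat.mod_eq_of_lt hp,
    Nat.add_mul_div_left _ _ hb, Nat.div_eq_of_lt hp, zero_add]

theorem map_baseDigits_map_baseEval {lam : Multiset (ℕ × ℕ)} (h : ∀ p ∈ lam, p.1 < b) :
    (lam.map (baseEval b)).map (baseDigits b) = lam := by
  rw [Multiset.map_map]
  exact (Multiset.map_congr rfl fun p hp => baseDigits_baseEval (h p hp)).trans lam.map_id

theorem injOn_baseEval : Set.InjOn (baseEval b) {p | p.1 < b} := fun p hp q hq hpq => by
  rw [← baseDigits_baseEval hp, ← baseDigits_baseEval hq, hpq]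

theorem eq_of_map_baseEval_eq {κ lam : Multiset (ℕ × ℕ)} (hlam : ∀ p ∈ lam, p.1 < b)
    (hsum : κ.sum.1 = lam.sum.1) (h : κ.map (baseEval b) = lam.map (baseEval b)) : κ = lam := by
  have hfst (s : Multiset (ℕ × ℕ)) : s.sum.1 = (s.map Prod.fst).sum :=
    map_multiset_sum (AddMonoidHom.fst ℕ ℕ) s
  have hκ : ∀ q ∈ κ, q.1 < b := by
    by_contra! ⟨q, hq, hbq⟩
    obtain ⟨p, hp, -⟩ := Multiset.mem_map.mp (h ▸ Multiset.mem_map_of_mem (baseEval b) hq)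
    have hb : 0 < b := p.1.zero_le.trans_lt (hlam p hp)
    have hlt : (κ.map fun q => baseEval b q % b).sum < (κ.map Prod.fst).sum :=
      Multiset.sum_lt_sum (fun q _ => (baseEval_mod q).trans_le (Nat.mod_le _ _))
        ⟨q, hq, (baseEval_mod q).trans_lt ((Nat.mod_lt _ hb).trans_le hbq)⟩
    have hdigits : (κ.map fun q => baseEval b q % b).sum = (lam.map Prod.fst).sum := by
      rw [show (fun q => baseEval b q % b) = (· % b) ∘ baseEval b from rfl, ← Multiset.map_map, h,
        Multiset.map_map]
      exact congrArg _ (Multiset.map_congr rfl fun p hp =>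
        (baseEval_mod p).trans (Nat.mod_eq_of_lt (hlam p hp)))
    rw [hdigits, ← hfst, ← hfst, hsum] at hlt
    exact hlt.false
  rw [← map_baseDigits_map_baseEval hκ, h, map_baseDigits_map_baseEval hlam]

end BaseExpansion

theorem multPartition_map_of_injOn {M N : Type*} {f : M → N} {lam : Multiset M}
    (hf : Set.InjOn f {x | x ∈ lam}) : multPartition (lam.map f) = multPartition lam := by
  classical
  have hdedup : (lam.map f).dedup = lam.dedup.map f := by
    refine (Multiset.Nodup.ext (Multiset.nodup_dedup _) ((Multiset.nodup_dedup lam).map_on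
      fun x hx y hy => hf (Multiset.mem_dedup.mp hx) (Multiset.mem_dedup.mp hy))).mpr fun u => ?_
    simp only [Multiset.mem_dedup, Multiset.mem_map]
  unfold multPartition
  rw [hdedup, Multiset.map_map]
  exact Multiset.map_congr rfl fun x hx =>
    Multiset.count_map_eq_count f lam hf x (Multiset.mem_dedup.mp hx)

theorem bijOn_map_refines_diff {M N : Type*} [AddCommMonoid M] [AddCommMonoid N] (f : M →+ N)
    {μ₀ μ₁ : Multiset M}
    (hinj : Set.InjOn (Multiset.map f) ({lam | Refines μ₀ lam} \ {lam | Refines μ₁ lam}))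
    (hdisj : ∀ κ ∈ {lam | Refines μ₀ lam} \ {lam | Refines μ₁ lam}, ∀ lam, Refines μ₁ lam →
      lam.map f ≠ κ.map f) :
    Set.BijOn (Multiset.map f) ({lam | Refines μ₀ lam} \ {lam | Refines μ₁ lam})
      ({ν | Refines (μ₀.map f) ν} \ {ν | Refines (μ₁.map f) ν}) := by
  refine ⟨fun κ hκ => ⟨hκ.1.map f, fun h => ?_⟩, hinj, fun ν ⟨h₀, h₁⟩ => ?_⟩
  · obtain ⟨lam, hlam, hmap⟩ := h.exists_of_map f
    exact hdisj κ hκ lam hlam hmap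
  · obtain ⟨lam, hlam, rfl⟩ := h₀.exists_of_map f
    exact ⟨lam, ⟨hlam, fun h => h₁ (h.map f)⟩, rfl⟩

theorem fst_lt_of_not_refines {a j r : ℕ} {lam : Multiset (ℕ × ℕ)}
    (h₀ : Refines (unitDecomp (j, r)) lam) (h₁ : ¬ Refines ((a, 0) ::ₘ unitDecomp (j - a, r)) lam) :
    ∀ p ∈ lam, p.1 < a := by
  obtain ⟨hsum, h0⟩ := refines_unitDecomp_iff.mp h₀
  intro p hp
  by_contra! hap
  have h := refines_cons_unitDecomp_sub (x := (a, 0)) h0 hp ⟨hap, Nat.zero_le _⟩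
  rw [hsum, Prod.mk_sub_mk, Nat.sub_zero] at h
  exact h₁ h

theorem stmt5_general (a b j r : ℕ) (hab : a ≤ b) (hj : a ≤ j) :
    Set.BijOn (fun lam : Multiset (ℕ × ℕ) => lam.map fun p => p.1 + b * p.2)
      ({lam : Multiset (ℕ × ℕ) |
          Refines (Multiset.replicate j (1, 0) + Multiset.replicate r (0, 1)) lam} \
        {lam : Multiset (ℕ × ℕ) |
          Refines (Multiset.replicate (j - a) (1, 0) +
            ((a, 0) ::ₘ Multiset.replicate r (0, 1))) lam})
      ({lam : Multiset ℕ |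
          Refines (Multiset.replicate j 1 + Multiset.replicate r b) lam} \
        {lam : Multiset ℕ |
          Refines (Multiset.replicate (j - a) 1 + (a ::ₘ Multiset.replicate r b)) lam}) ∧
    ∀ lam ∈ ({lam : Multiset (ℕ × ℕ) |
          Refines (Multiset.replicate j (1, 0) + Multiset.replicate r (0, 1)) lam} \
        {lam : Multiset (ℕ × ℕ) |
          Refines (Multiset.replicate (j - a) (1, 0) +
            ((a, 0) ::ₘ Multiset.replicate r (0, 1))) lam}),
      multPartition (lam.map fun p => p.1 + b * p.2) = multPartition lam := by
  rw [Multiset.add_cons, Multiset.add_cons,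
    show Multiset.replicate j (1, 0) + Multiset.replicate r (0, 1) = unitDecomp (j, r) from rfl,
    show Multiset.replicate (j - a) (1, 0) + Multiset.replicate r (0, 1) = unitDecomp (j - a, r)
      from rfl]
  have hρ₀ : Multiset.replicate j 1 + Multiset.replicate r b =
      (unitDecomp (j, r)).map (baseEval b) := by
    simp [unitDecomp, Multiset.map_replicate, baseEval_apply]
  have hρ₁ : a ::ₘ (Multiset.replicate (j - a) 1 + Multiset.replicate r b) =
      ((a, 0) ::ₘ unitDecomp (j - a, r)).map (baseEval b) := by
    simp [unitDecomp, Multiset.map_replicate, baseEval_apply]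
  rw [hρ₀, hρ₁]
  have hsmall : ∀ lam ∈ {lam | Refines (unitDecomp (j, r)) lam} \
      {lam | Refines ((a, 0) ::ₘ unitDecomp (j - a, r)) lam}, ∀ p ∈ lam, p.1 < b :=
    fun lam h p hp => (fst_lt_of_not_refines h.1 h.2 p hp).trans_le hab
  have hsum₁ : ((a, 0) ::ₘ unitDecomp (j - a, r)).sum = (unitDecomp (j, r)).sum := by
    simp only [Multiset.sum_cons, sum_unitDecomp, Prod.mk_add_mk, Nat.add_sub_cancel' hj, zero_add]
  refine ⟨bijOn_map_refines_diff (baseEval b) ?_ ?_, fun lam h => multPartition_map_of_injOn ?_⟩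
  · intro κ hκ lam hlam h
    exact eq_of_map_baseEval_eq (hsmall lam hlam) (by rw [hκ.1.sum_eq, hlam.1.sum_eq]) h
  · intro κ hκ lam hlam h
    refine hκ.2 (eq_of_map_baseEval_eq (hsmall κ hκ) ?_ h ▸ hlam)
    rw [hκ.1.sum_eq, hlam.sum_eq, hsum₁]
  · exact injOn_baseEval.mono (hsmall lam h)

/-- The bijection in the proof of Lemma 5.21 of the paper: with `φ(c₁,c₂) = c₁ + b·c₂`,
the induced map `Φ` on multisets restricts to a bijection
`{λ : μ₀ ≤ λ} ∖ {λ : μ₁ ≤ λ} → {λ : ρ₀ ≤ λ} ∖ {λ : ρ₁ ≤ λ}`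
preserving multiplicity partitions, where `μ₀ = (1,0)^j (0,1)^r`,
`μ₁ = (1,0)^{j−a} (a,0) (0,1)^r`, `ρ₀ = 1^j b^r`, `ρ₁ = 1^{j−a} a b^r`. -/
theorem stmt5 (a b j r : ℕ) (ha : 1 < a) (hab : a ≤ b) (hj : a ≤ j) :
    Set.BijOn (fun lam : Multiset (ℕ × ℕ) => lam.map fun p => p.1 + b * p.2)
      ({lam : Multiset (ℕ × ℕ) |
          Refines (Multiset.replicate j (1, 0) + Multiset.replicate r (0, 1)) lam} \
        {lam : Multiset (ℕ × ℕ) |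
          Refines (Multiset.replicate (j - a) (1, 0) +
            ((a, 0) ::ₘ Multiset.replicate r (0, 1))) lam})
      ({lam : Multiset ℕ |
          Refines (Multiset.replicate j 1 + Multiset.replicate r b) lam} \
        {lam : Multiset ℕ |
          Refines (Multiset.replicate (j - a) 1 + (a ::ₘ Multiset.replicate r b)) lam}) ∧
    ∀ lam ∈ ({lam : Multiset (ℕ × ℕ) |
          Refines (Multiset.replicate j (1, 0) + Multiset.replicate r (0, 1)) lam} \
        {lam : Multiset (ℕ × ℕ) |
          Refines (Multiset.replicate (j - a) (1, 0) +
            ((a, 0) ::ₘ Multiset.replicate r (0, 1))) lam}),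
      multPartition (lam.map fun p => p.1 + b * p.2) = multPartition lam :=
  stmt5_general a b j r hab hj
end

section
/- Let F be a finite field with q elements and let a ≥ 2 and n ≥ 2a be integers. Then the number of homogeneous polynomials f ∈ F[x,y] of degree n such that no polynomial g ∈ F[x,y] of positive degree satisfies g^a ∣ f equals q^{n−2a+1}(q^a − q)(q^a − 1). (This is the exact finite-field count over X = ℙ¹ of a-th-power-free binary forms; dividing by the total number q^{n+1} of homogeneous polynomials of degree n gives (1 − q^{1−a})(1 − q^{−a}) = 1/ζ_{ℙ¹}(a), the finite-field instance of Remark 1.8(vi) of the paper: the motivic probability of no m-multiple points is 1/ζ_X(binom(d+m−1,d)).) -/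
/-!
Dehomogenizing `f ↦ f(x, 1)` identifies binary forms of degree `n` with polynomials `P` of degree
at most `n`, and `f` is `a`-th-power free iff `P` is and `y ^ a ∤ f`, i.e. `n - a < deg P`.
Every monic `P` factors uniquely as `S * G ^ a` with `S` monic and `a`-th-power free and `G` monic,
so the number `A d` of monic `a`-th-power free polynomials of degree `d` satisfies
`q ^ m = ∑ k, A (m - a k) * q ^ k`; comparing this for `m` and `m - a` gives
`A d = q ^ d - q ^ (d - a + 1)` for `d ≥ a`. Summing `(q - 1) * A d` over `n - a < d ≤ n` gives the
count.
-/

open Polynomial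

namespace Polynomial

section CommRing

variable {R : Type*} [CommRing R]

def IsPowerFree (a : ℕ) (P : R[X]) : Prop :=
  ¬∃ G : R[X], 0 < G.natDegree ∧ G ^ a ∣ P

lemma IsPowerFree.ne_zero [Nontrivial R] {a : ℕ} {P : R[X]} (hP : IsPowerFree a P) : P ≠ 0 := by
  rintro rfl
  exact hP ⟨X, by simp, dvd_zero _⟩

lemma IsPowerFree.pos [Nontrivial R] {a : ℕ} {P : R[X]} (hP : IsPowerFree a P) : 0 < a := by
  refine Nat.pos_of_ne_zero ?_
  rintro rfl
  exact hP ⟨X, by simp, by simp⟩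

noncomputable def dehomogenize : MvPolynomial (Fin 2) R →ₐ[R] R[X] :=
  MvPolynomial.aeval ![X, 1]

lemma dehomogenize_homogenize {P : R[X]} {n : ℕ} (hP : P.natDegree ≤ n) :
    dehomogenize (P.homogenize n) = P :=
  aeval_homogenize_X_one P hP

lemma homogenize_dehomogenize {f : MvPolynomial (Fin 2) R} {n : ℕ} (hf : f.IsHomogeneous n) :
    (dehomogenize f).homogenize n = f :=
  homogenize_eq_of_isHomogeneous hf rfl

lemma natDegree_dehomogenize_le (f : MvPolynomial (Fin 2) R) :
    (dehomogenize f).natDegree ≤ f.totalDegree := by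
  conv_lhs => rw [f.as_sum, map_sum]
  refine natDegree_sum_le_of_forall_le _ _ fun d hd => ?_
  have hd0 : d 0 ≤ f.totalDegree := by
    have := MvPolynomial.le_totalDegree hd
    rw [Finsupp.sum_fintype _ _ (fun _ => rfl), Fin.sum_univ_two] at this
    omega
  simpa [dehomogenize, MvPolynomial.aeval_monomial, Finsupp.prod_fintype, Fin.prod_univ_two]
    using (natDegree_C_mul_X_pow_le _ _).trans hd0

lemma homogenize_pow (P : R[X]) {m : ℕ} (hP : P.natDegree ≤ m) (k : ℕ) :
    (P ^ k).homogenize (m * k) = P.homogenize m ^ k :=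
  homogenize_eq_of_isHomogeneous ((isHomogeneous_homogenize P).pow k)
    (by rw [map_pow, aeval_homogenize_X_one P hP])

lemma homogenize_dvd_of_dehomogenize_eq_mul {f : MvPolynomial (Fin 2) R} {n k : ℕ}
    (hf : f.IsHomogeneous n) {P Q : R[X]} (h : dehomogenize f = P * Q) (hk : k ≤ n)
    (hP : P.natDegree ≤ k) (hQ : Q.natDegree ≤ n - k) : P.homogenize k ∣ f := by
  rw [← homogenize_dehomogenize hf, h, ← Nat.add_sub_cancel' hk, homogenize_mul _ _ hP hQ]
  exact dvd_mul_right _ _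

end CommRing

end Polynomial

namespace MvPolynomial

variable {R σ : Type*} [CommRing R] [IsDomain R]

lemma totalDegree_pow_of_isDomain (f : MvPolynomial σ R) (k : ℕ) :
    (f ^ k).totalDegree = k * f.totalDegree := by
  rcases eq_or_ne f 0 with rfl | hf
  · rcases k with _ | k <;> simp
  induction k with
  | zero => simp
  | succ k ih => rw [pow_succ, totalDegree_mul_of_isDomain (pow_ne_zero k hf) hf, ih]; ring

def IsPowerFree (a : ℕ) (f : MvPolynomial σ R) : Prop :=
  ¬∃ g : MvPolynomial σ R, 0 < g.totalDegree ∧ g ^ a ∣ f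

lemma IsPowerFree.ne_zero [Nonempty σ] {a : ℕ} {f : MvPolynomial σ R} (hf : f.IsPowerFree a) :
    f ≠ 0 := by
  rintro rfl
  exact hf ⟨X (Classical.arbitrary σ), by simp, dvd_zero _⟩

end MvPolynomial

theorem MvPolynomial.IsHomogeneous.isPowerFree_iff {R : Type*} [CommRing R] [IsDomain R]
    {f : MvPolynomial (Fin 2) R} {n a : ℕ} (hf : f.IsHomogeneous n) :
    f.IsPowerFree a ↔ (dehomogenize f).IsPowerFree a ∧ n < (dehomogenize f).natDegree + a := by
  constructor
  · intro hfree
    have hPn : (dehomogenize f).natDegree ≤ n :=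
      (natDegree_dehomogenize_le f).trans hf.totalDegree_le
    have hP0 : dehomogenize f ≠ 0 := fun h0 => hfree.ne_zero (by
      rw [← homogenize_dehomogenize hf, h0, homogenize_zero])
    refine ⟨?_, ?_⟩
    · rintro ⟨G, hG, Q, hGQ⟩
      have hdeg : (dehomogenize f).natDegree = G.natDegree * a + Q.natDegree := by
        rw [hGQ, natDegree_mul (left_ne_zero_of_mul (hGQ ▸ hP0)) (right_ne_zero_of_mul (hGQ ▸ hP0)),
          natDegree_pow, mul_comm]
      refine hfree ⟨G.homogenize G.natDegree, ?_, ?_⟩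
      · rwa [(isHomogeneous_homogenize G).totalDegree
          ((homogenize_eq_zero_iff le_rfl).not.2 (ne_zero_of_natDegree_gt hG))]
      · rw [← homogenize_pow G le_rfl]
        exact homogenize_dvd_of_dehomogenize_eq_mul hf hGQ (by omega)
          (natDegree_pow_le.trans_eq (mul_comm _ _)) (by omega)
    · by_contra! hle
      have := homogenize_dvd_of_dehomogenize_eq_mul hf (one_mul _).symm (k := a) (by omega)
        (by simp) (by omega)
      exact hfree ⟨X 1, by simp, by rwa [homogenize_one] at this⟩
  · rintro ⟨hP, hn⟩ ⟨g, hg, h, rfl⟩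
    have hgh : dehomogenize (g ^ a * h) = dehomogenize g ^ a * dehomogenize h := by simp
    rcases Nat.eq_zero_or_pos (dehomogenize g).natDegree with hg0 | hgpos
    · have hf0 : g ^ a * h ≠ 0 := fun h0 => hP.ne_zero (by rw [h0, map_zero])
      have hdeg : (dehomogenize (g ^ a * h)).natDegree ≤ h.totalDegree := by
        rw [hgh]
        have := natDegree_dehomogenize_le h
        have : (dehomogenize g ^ a).natDegree ≤ a * 0 := hg0 ▸ natDegree_pow_le
        exact natDegree_mul_le.trans (by omega)
      have htot : a * g.totalDegree + h.totalDegree = n := by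
        rw [← hf.totalDegree hf0, totalDegree_mul_of_isDomain (left_ne_zero_of_mul hf0)
          (right_ne_zero_of_mul hf0), totalDegree_pow_of_isDomain]
      have : a ≤ a * g.totalDegree := Nat.le_mul_of_pos_right a hg
      omega
    · exact hP ⟨_, hgpos, hgh ▸ dvd_mul_right _ _⟩

/-- `n + 1 - a ≤ d ↔ n < d + a` holds even for `n < a`, unlike the truncated `n - a < d`. -/
noncomputable def homogeneousIsPowerFreeEquiv {R : Type*} [CommRing R] [IsDomain R] (n a : ℕ) :
    {f : MvPolynomial (Fin 2) R // f.IsHomogeneous n ∧ f.IsPowerFree a} ≃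
      {P : R[X] // P.IsPowerFree a ∧ P.natDegree ∈ Finset.Ico (n + 1 - a) (n + 1)} where
  toFun f := ⟨dehomogenize f, by
    obtain ⟨hP, hn⟩ := (f.2.1.isPowerFree_iff).1 f.2.2
    have := (natDegree_dehomogenize_le f.1).trans f.2.1.totalDegree_le
    exact ⟨hP, Finset.mem_Ico.2 ⟨by omega, by omega⟩⟩⟩
  invFun P := ⟨P.1.homogenize n, isHomogeneous_homogenize _, by
    obtain ⟨hP, hd⟩ := P.2
    have hd := Finset.mem_Ico.1 hd
    rw [(isHomogeneous_homogenize _).isPowerFree_iff, dehomogenize_homogenize (by omega)]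
    exact ⟨hP, by omega⟩⟩
  left_inv f := Subtype.ext (homogenize_dehomogenize f.2.1)
  right_inv P := Subtype.ext (dehomogenize_homogenize (by have := Finset.mem_Ico.1 P.2.2; omega))

theorem Nat.card_subtype_eq_sum_card_fiberwise {α β : Type*} (f : α → β) (p : α → Prop)
    (s : Finset β) [∀ b, Finite {x // p x ∧ f x = b}] :
    Nat.card {x // p x ∧ f x ∈ s} = ∑ b ∈ s, Nat.card {x // p x ∧ f x = b} := by
  rw [← Finset.sum_coe_sort s, ← Nat.card_sigma]
  exact Nat.card_congr
    { toFun x := ⟨⟨f x.1, x.2.2⟩, x.1, x.2.1, rfl⟩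
      invFun y := ⟨y.2.1, y.2.2.1, by rw [y.2.2.2]; exact y.1.2⟩
      left_inv _ := rfl
      right_inv := by rintro ⟨⟨b, hb⟩, x, hx, hxb⟩; cases hxb; rfl }

namespace Polynomial

section Field

variable {K : Type*} [Field K] {a : ℕ}

open UniqueFactorizationMonoid

lemma IsPowerFree.count_normalizedFactors_lt [DecidableEq K] {S : K[X]} (hS : S.IsPowerFree a)
    (p : K[X]) : (normalizedFactors S).count p < a := by
  by_contra! hc
  have hp : p ∈ normalizedFactors S := Multiset.count_pos.1 (hS.pos.trans_le hc)
  refine hS ⟨p, (irreducible_of_normalized_factor p hp).natDegree_pos, ?_⟩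
  calc p ^ a ∣ p ^ (normalizedFactors S).count p := pow_dvd_pow p hc
    _ = ((normalizedFactors S).filter (Eq p)).prod := Multiset.pow_count p
    _ ∣ (normalizedFactors S).prod := Multiset.prod_dvd_prod_of_le (Multiset.filter_le _ _)
    _ ∣ S := (prod_normalizedFactors hS.ne_zero).dvd

lemma count_normalizedFactors_pow_eq_div [DecidableEq K] {S G : K[X]} (hS : S.IsPowerFree a)
    (hG : G ≠ 0) (p : K[X]) :
    (normalizedFactors G).count p = (normalizedFactors (S * G ^ a)).count p / a := by
  rw [normalizedFactors_mul hS.ne_zero (pow_ne_zero a hG), normalizedFactors_pow,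
    Multiset.count_add, Multiset.count_nsmul, Nat.add_mul_div_left _ _ hS.pos,
    Nat.div_eq_of_lt (hS.count_normalizedFactors_lt p), zero_add]

lemma eq_of_isPowerFree_mul_pow {S₁ S₂ G₁ G₂ : K[X]} (hS₁ : S₁.IsPowerFree a)
    (hS₂ : S₂.IsPowerFree a) (hG₁ : G₁.Monic) (hG₂ : G₂.Monic)
    (h : S₁ * G₁ ^ a = S₂ * G₂ ^ a) : S₁ = S₂ ∧ G₁ = G₂ := by
  classical
  have hG : G₁ = G₂ := by
    have hfac : normalizedFactors G₁ = normalizedFactors G₂ := Multiset.ext.2 fun p => by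
      rw [count_normalizedFactors_pow_eq_div hS₁ hG₁.ne_zero,
        count_normalizedFactors_pow_eq_div hS₂ hG₂.ne_zero, h]
    refine eq_of_monic_of_associated hG₁ hG₂ ?_
    exact (prod_normalizedFactors hG₁.ne_zero).symm.trans
      (hfac ▸ prod_normalizedFactors hG₂.ne_zero)
  subst hG
  exact ⟨mul_right_cancel₀ (pow_ne_zero a hG₁.ne_zero) h, rfl⟩

lemma exists_isPowerFree_mul_pow (ha : a ≠ 0) {P : K[X]} (hP : P.Monic) :
    ∃ S G : K[X], S.Monic ∧ S.IsPowerFree a ∧ G.Monic ∧ P = S * G ^ a := by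
  classical
  induction h : P.natDegree using Nat.strong_induction_on generalizing P with
  | _ m ih =>
  by_cases hfree : P.IsPowerFree a
  · exact ⟨P, 1, hP, hfree, monic_one, by simp⟩
  obtain ⟨G, hG, hGP⟩ := not_not.1 hfree
  have hG0 : G ≠ 0 := ne_zero_of_natDegree_gt hG
  obtain ⟨Q, rfl⟩ : normalize G ^ a ∣ P :=
    (normalize_associated G).pow_pow.dvd_iff_dvd_left.2 hGP
  have hGmonic : (normalize G).Monic := monic_normalize hG0
  have hQ : Q.Monic := (hGmonic.pow a).of_mul_monic_left hP
  have hdeg : (normalize G ^ a * Q).natDegree = a * G.natDegree + Q.natDegree := by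
    rw [(hGmonic.pow a).natDegree_mul hQ, natDegree_pow, natDegree_eq_of_degree_eq degree_normalize]
  obtain ⟨S, H, hS, hSfree, hH, rfl⟩ :=
    ih Q.natDegree (by nlinarith [Nat.pos_of_ne_zero ha]) hQ rfl
  exact ⟨S, normalize G * H, hS, hSfree, hGmonic.mul hH, by ring⟩

lemma finite_of_natDegree_le [Finite K] {p : K[X] → Prop} {d : ℕ}
    (h : ∀ P, p P → P.natDegree ≤ d) : Finite {P // p P} :=
  Finite.of_injective (fun P : {P // p P} => degreeLTEquiv K (d + 1)
      ⟨P.1, mem_degreeLT.2 ((degree_le_of_natDegree_le (h P.1 P.2)).trans_lt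
        (WithBot.coe_lt_coe.2 d.lt_succ_self))⟩)
    fun P Q hPQ => Subtype.ext (by simpa using (degreeLTEquiv K (d + 1)).injective hPQ)

lemma card_monic_natDegree_eq [Fintype K] (d : ℕ) :
    Nat.card {P : K[X] // P.Monic ∧ P.natDegree = d} = Fintype.card K ^ d := by
  rw [Nat.card_congr ((monicEquivDegreeLT d).trans (degreeLTEquiv K d).toEquiv), Nat.card_fun,
    Nat.card_eq_fintype_card, Nat.card_eq_fintype_card, Fintype.card_fin]

noncomputable def sigmaIsPowerFreeMulPowEquiv (ha : a ≠ 0) (m : ℕ) :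
    (Σ k : Fin (m / a + 1), {S : K[X] // S.Monic ∧ S.IsPowerFree a ∧ S.natDegree = m - a * k} ×
      {G : K[X] // G.Monic ∧ G.natDegree = k}) ≃ {P : K[X] // P.Monic ∧ P.natDegree = m} := by
  refine Equiv.ofBijective
    (fun x => ⟨x.2.1 * x.2.2 ^ a, x.2.1.2.1.mul (x.2.2.2.1.pow a), ?_⟩) ⟨?_, ?_⟩
  · obtain ⟨k, ⟨S, hS, -, hSd⟩, ⟨G, hG, hGd⟩⟩ := x
    have : a * k ≤ m := mul_comm a k ▸
      (Nat.le_div_iff_mul_le (Nat.pos_of_ne_zero ha)).1 (Nat.lt_succ_iff.1 k.2)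
    rw [hS.natDegree_mul (hG.pow a), natDegree_pow, hSd, hGd]
    omega
  · rintro ⟨k₁, ⟨S₁, hS₁⟩, ⟨G₁, hG₁⟩⟩ ⟨k₂, ⟨S₂, hS₂⟩, ⟨G₂, hG₂⟩⟩ h
    obtain ⟨rfl, rfl⟩ := eq_of_isPowerFree_mul_pow hS₁.2.1 hS₂.2.1 hG₁.1 hG₂.1
      (congrArg Subtype.val h)
    obtain rfl : k₁ = k₂ := Fin.ext (hG₁.2.symm.trans hG₂.2)
    rfl
  · rintro ⟨P, hP, rfl⟩
    obtain ⟨S, G, hS, hSfree, hG, rfl⟩ := exists_isPowerFree_mul_pow ha hP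
    have hdeg := hS.natDegree_mul (hG.pow a)
    rw [natDegree_pow] at hdeg
    have hk : G.natDegree < (S * G ^ a).natDegree / a + 1 :=
      Nat.lt_succ_of_le ((Nat.le_div_iff_mul_le (Nat.pos_of_ne_zero ha)).2 (by rw [hdeg]; lia))
    exact ⟨⟨⟨G.natDegree, hk⟩, ⟨S, hS, hSfree, by rw [Fin.val_mk]; omega⟩, ⟨G, hG, rfl⟩⟩, rfl⟩

section Fintype

variable [Fintype K]

lemma pow_eq_sum_card_monic_isPowerFree_mul_pow (ha : a ≠ 0) (m : ℕ) :
    Fintype.card K ^ m = ∑ k ∈ Finset.range (m / a + 1),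
      Nat.card {S : K[X] // S.Monic ∧ S.IsPowerFree a ∧ S.natDegree = m - a * k} *
        Fintype.card K ^ k := by
  have (d : ℕ) : Finite {S : K[X] // S.Monic ∧ S.IsPowerFree a ∧ S.natDegree = d} :=
    finite_of_natDegree_le fun _ hS => hS.2.2.le
  have (d : ℕ) : Finite {S : K[X] // S.Monic ∧ S.natDegree = d} :=
    finite_of_natDegree_le fun _ hS => hS.2.le
  rw [← card_monic_natDegree_eq, ← Nat.card_congr (sigmaIsPowerFreeMulPowEquiv ha m),
    Nat.card_sigma, ← Fin.sum_univ_eq_sum_range]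
  simp_rw [Nat.card_prod, card_monic_natDegree_eq]

lemma card_monic_isPowerFree_add_pow (ha : a ≠ 0) {d : ℕ} (hd : a ≤ d) :
    Nat.card {S : K[X] // S.Monic ∧ S.IsPowerFree a ∧ S.natDegree = d} +
      Fintype.card K ^ (d - a + 1) = Fintype.card K ^ d := by
  have hdiv : d / a = (d - a) / a + 1 := Nat.div_eq_sub_div (Nat.pos_of_ne_zero ha) hd
  rw [pow_eq_sum_card_monic_isPowerFree_mul_pow ha d, hdiv, Finset.sum_range_succ',
    pow_succ', pow_eq_sum_card_monic_isPowerFree_mul_pow ha (d - a), Finset.mul_sum, add_comm,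
    mul_zero, Nat.sub_zero, pow_zero, mul_one]
  refine congrArg (· + _) (Finset.sum_congr rfl fun k _ => ?_)
  rw [show d - a * (k + 1) = d - a - a * k by rw [Nat.mul_succ]; omega]
  ring

end Fintype

noncomputable def unitsProdMonicEquiv (p : K[X] → Prop)
    (hp : ∀ (c : K) (P : K[X]), c ≠ 0 → (p (C c * P) ↔ p P)) (hp0 : ∀ P, p P → P ≠ 0) :
    {P // p P} ≃ Kˣ × {P // P.Monic ∧ p P} where
  toFun P :=
    have hc : P.1.leadingCoeff ≠ 0 := leadingCoeff_ne_zero.2 (hp0 _ P.2)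
    (Units.mk0 _ hc, ⟨C P.1.leadingCoeff⁻¹ * P.1,
      monic_C_mul_of_mul_leadingCoeff_eq_one (inv_mul_cancel₀ hc), (hp _ _ (inv_ne_zero hc)).2 P.2⟩)
  invFun x := ⟨C (x.1 : K) * x.2.1, (hp _ _ x.1.ne_zero).2 x.2.2.2⟩
  left_inv P := Subtype.ext (by
    simp [← mul_assoc, ← C_mul, mul_inv_cancel₀ (leadingCoeff_ne_zero.2 (hp0 _ P.2))])
  right_inv x := by
    ext
    · simp [x.2.2.1.leadingCoeff_C_mul]
    · simp [x.2.2.1.leadingCoeff_C_mul, ← mul_assoc, ← C_mul]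

lemma card_eq_card_sub_one_mul_card_monic [Fintype K] (p : K[X] → Prop)
    (hp : ∀ (c : K) (P : K[X]), c ≠ 0 → (p (C c * P) ↔ p P)) (hp0 : ∀ P, p P → P ≠ 0) :
    Nat.card {P // p P} = (Fintype.card K - 1) * Nat.card {P // P.Monic ∧ p P} := by
  rw [Nat.card_congr (unitsProdMonicEquiv p hp hp0), Nat.card_prod, Nat.card_units,
    Nat.card_eq_fintype_card]

lemma IsPowerFree.C_mul_iff {c : K} (hc : c ≠ 0) {P : K[X]} :
    (C c * P).IsPowerFree a ↔ P.IsPowerFree a := by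
  simp only [IsPowerFree, dvd_C_mul hc]

lemma card_isPowerFree_natDegree_eq [Fintype K] (d : ℕ) :
    Nat.card {P : K[X] // P.IsPowerFree a ∧ P.natDegree = d} =
      (Fintype.card K - 1) * Nat.card {P : K[X] // P.Monic ∧ P.IsPowerFree a ∧ P.natDegree = d} :=
  card_eq_card_sub_one_mul_card_monic _
    (fun _ _ hc => by rw [IsPowerFree.C_mul_iff hc, natDegree_C_mul hc]) fun _ hP => hP.1.ne_zero

end Field

end Polynomial

lemma sum_range_sub_one_mul_eq_of_add_pow_eq {q a m : ℕ} {N : ℕ → ℕ} (hq : 1 ≤ q) (ha : a ≠ 0)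
    (ham : a ≤ m)
    (hN : ∀ j < a, N j + q ^ (m + j - a + 1) = q ^ (m + j)) :
    ∑ j ∈ Finset.range a, (q - 1) * N j = q ^ (m - a) * (q ^ a - q) * (q ^ a - 1) := by
  obtain ⟨e, rfl⟩ : ∃ e, m = e + a := ⟨m - a, by omega⟩
  have hN' : ∀ j ∈ Finset.range a, (N j : ℤ) = q ^ (e + a + j) - q ^ (e + j + 1) := fun j hj => by
    have := hN j (Finset.mem_range.1 hj)
    rw [show e + a + j - a + 1 = e + j + 1 by omega] at this
    have := congrArg (Nat.cast : ℕ → ℤ) this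
    push_cast at this
    linarith
  zify [hq, Nat.one_le_pow a q hq, Nat.le_self_pow ha q]
  rw [Finset.sum_congr rfl fun j hj => by rw [hN' j hj], Nat.add_sub_cancel]
  calc _ = ∑ j ∈ Finset.range a, (q : ℤ) ^ e * (q ^ a - q) * ((q : ℤ) ^ j * (q - 1)) :=
        Finset.sum_congr rfl fun j _ => by ring
    _ = _ := by rw [← Finset.mul_sum, ← Finset.sum_mul, geom_sum_mul]

/-- The number of `a`-th-power-free homogeneous polynomials of degree `n ≥ 2a` in
`𝔽_q[x,y]` (no `g` of positive degree has `g^a ∣ f`) equals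
`q^{n−2a+1}(q^a − q)(q^a − 1)` — the exact finite-field count over `X = ℙ¹`, the
finite-field instance of Remark 1.8(vi) of the paper. -/
theorem stmt14 (F : Type*) [Field F] [Fintype F] (q : ℕ) (hq : Fintype.card F = q)
    (a n : ℕ) (ha : 2 ≤ a) (hn : 2 * a ≤ n) :
    Nat.card {f : MvPolynomial (Fin 2) F // f.IsHomogeneous n ∧
        ¬ ∃ g : MvPolynomial (Fin 2) F, 0 < g.totalDegree ∧ g ^ a ∣ f}
      = q ^ (n - 2 * a + 1) * (q ^ a - q) * (q ^ a - 1) := by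
  subst hq
  have (d : ℕ) : Finite {P : F[X] // P.IsPowerFree a ∧ P.natDegree = d} :=
    finite_of_natDegree_le fun _ hP => hP.2.le
  refine (Nat.card_congr (homogeneousIsPowerFreeEquiv n a)).trans ?_
  rw [Nat.card_subtype_eq_sum_card_fiberwise,
    Finset.sum_Ico_eq_sum_range, show n + 1 - (n + 1 - a) = a by omega,
    show n - 2 * a + 1 = n + 1 - a - a by omega]
  simp_rw [card_isPowerFree_natDegree_eq]
  exact sum_range_sub_one_mul_eq_of_add_pow_eq Fintype.card_pos (by omega) (by omega)
    fun j _ => card_monic_isPowerFree_add_pow (by omega) (by omega)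
end
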